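/- Fix μ > 0 and let M(μ) = max over nonnegative integers k of e^{−μ}·μ^k/k! (the maximum exists and is positive). For every ε > 0 there exists n₀ ≥ μ such that for every n > n₀, in the n-agent economy with independent prior with parameter π_n = μ/n: (1) there exists a reduced form implementable pair (Qa, Qb) with Qa − Qb > M(μ) − ε, and (2) there exists a reduced form implementable pair (Q̂a, Q̂b) with Q̂b − Q̂a > M(μ) − ε. -/

import Mathlib

/-!
Consider the threshold rule that allocates iff fewer than `m` agents have type `a`. Summing
`(k + 1) C(n, k + 1) = (n - k) C(n, k)` telescopically gives
`∑_{k < m} (n p - k) B_n(k) = m (1 - p) B_n(m)`, hence `Q(b) - Q(a) = m B_n(m) / (n p)`; since the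
binomial mean is `n p`, the complementary rule has the same gap with the opposite sign. For
`p = μ / n` the Poisson limit theorem sends the gap to `m e^{-μ} μ^m / (m! μ) = e^{-μ} μ^{m-1} / (m-1)!`,
which is `M(μ)` when `m - 1` is a maximiser.
-/

open Finset Filter Topology

noncomputable section

def binomWeight (n : ℕ) (p : ℝ) (k : ℕ) : ℝ :=
  n.choose k * p ^ k * (1 - p) ^ (n - k)

def interimA (n : ℕ) (p : ℝ) (q : ℕ → ℝ) : ℝ :=
  1 / (n * p) * ∑ k ∈ range (n + 1), (k : ℝ) * q k * binomWeight n p k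

def interimB (n : ℕ) (p : ℝ) (q : ℕ → ℝ) : ℝ :=
  1 / (n * (1 - p)) * ∑ k ∈ range (n + 1), ((n : ℝ) - k) * q k * binomWeight n p k

end

section Binomial

variable {n m : ℕ} (p : ℝ)

theorem succ_mul_binomWeight_succ (hm : m ≤ n) :
    (m + 1) * (1 - p) * binomWeight n p (m + 1) = (n - m) * p * binomWeight n p m := by
  obtain rfl | hm := hm.eq_or_lt
  · simp [binomWeight]
  have hchoose := congrArg (Nat.cast : ℕ → ℝ) (Nat.choose_succ_right_eq n m)
  push_cast [Nat.cast_sub hm.le] at hchoose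
  obtain ⟨d, rfl⟩ : ∃ d, n = m + 1 + d := ⟨n - (m + 1), by omega⟩
  simp only [binomWeight, show m + 1 + d - m = d + 1 by omega, Nat.add_sub_cancel_left, pow_succ]
  linear_combination (p ^ m * p * (1 - p) ^ d * (1 - p)) * hchoose

theorem sum_range_sub_mul_binomWeight (hm : m ≤ n + 1) :
    ∑ k ∈ range m, (n * p - k) * binomWeight n p k = m * (1 - p) * binomWeight n p m := by
  induction m with
  | zero => simp
  | succ m ih =>
    rw [sum_range_succ, ih (by omega), Nat.cast_succ, succ_mul_binomWeight_succ p (by omega)]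
    ring

theorem sum_range_succ_sub_mul_binomWeight_eq_zero (n : ℕ) :
    ∑ k ∈ range (n + 1), (n * p - k) * binomWeight n p k = 0 := by
  rw [sum_range_sub_mul_binomWeight p le_rfl]
  simp [binomWeight]

end Binomial

theorem sum_range_ite_lt {M : Type*} [AddCommMonoid M] {m N : ℕ} (hm : m ≤ N) (f g : ℕ → M) :
    ∑ k ∈ range N, (if k < m then f k else g k) = ∑ k ∈ range m, f k + ∑ k ∈ Ico m N, g k := by
  rw [← sum_range_add_sum_Ico _ hm]
  congr 1
  · exact sum_congr rfl fun k hk => if_pos (mem_range.1 hk)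
  · exact sum_congr rfl fun k hk => if_neg (mem_Ico.1 hk).1.not_gt

section Interim

variable {n m : ℕ} {p : ℝ}

theorem interimB_sub_interimA (hn : 0 < n) (hp₀ : 0 < p) (hp₁ : p < 1) (q : ℕ → ℝ) :
    interimB n p q - interimA n p q =
      (∑ k ∈ range (n + 1), (n * p - k) * q k * binomWeight n p k) / (n * p * (1 - p)) := by
  have hn : (n : ℝ) ≠ 0 := by positivity
  have hp₁ : 1 - p ≠ 0 := (sub_pos.2 hp₁).ne'
  rw [interimA, interimB, mul_sum, mul_sum, ← sum_sub_distrib, sum_div]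
  refine sum_congr rfl fun k _ => ?_
  field_simp
  ring

theorem interimB_sub_interimA_ite_lt (hn : 0 < n) (hp₀ : 0 < p) (hp₁ : p < 1) (hm : m ≤ n + 1) :
    interimB n p (fun k => if k < m then 1 else 0) - interimA n p (fun k => if k < m then 1 else 0)
      = m * binomWeight n p m / (n * p) := by
  rw [interimB_sub_interimA hn hp₀ hp₁]
  simp only [mul_ite, ite_mul, mul_one, mul_zero, zero_mul]
  rw [sum_range_ite_lt hm, sum_const_zero, add_zero, sum_range_sub_mul_binomWeight p hm]
  have : 1 - p ≠ 0 := (sub_pos.2 hp₁).ne'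
  field_simp

theorem interimA_sub_interimB_ite_lt (hn : 0 < n) (hp₀ : 0 < p) (hp₁ : p < 1) (hm : m ≤ n + 1) :
    interimA n p (fun k => if k < m then 0 else 1) - interimB n p (fun k => if k < m then 0 else 1)
      = m * binomWeight n p m / (n * p) := by
  have hsplit := sum_range_succ_sub_mul_binomWeight_eq_zero p n
  rw [← sum_range_add_sum_Ico _ hm, sum_range_sub_mul_binomWeight p hm] at hsplit
  rw [← neg_sub, interimB_sub_interimA hn hp₀ hp₁]
  simp only [mul_ite, ite_mul, mul_one, mul_zero, zero_mul]
  rw [sum_range_ite_lt hm, sum_const_zero, zero_add, eq_neg_add_of_add_eq hsplit]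
  have : 1 - p ≠ 0 := (sub_pos.2 hp₁).ne'
  field_simp
  ring

end Interim

open ProbabilityTheory in
theorem tendsto_mul_binomWeight_div (μ : ℝ) (hμ : μ ≠ 0) (m : ℕ) :
    Tendsto (fun n : ℕ => m * binomWeight n (μ / n) m / (n * (μ / n))) atTop
      (𝓝 (m * (Real.exp (-μ) * μ ^ m / m.factorial) / μ)) := by
  have hmean : Tendsto (fun n : ℕ => n * (μ / n)) atTop (𝓝 μ) :=
    tendsto_const_nhds.congr' <| by
      filter_upwards [eventually_ne_atTop 0] with n hn
      field_simp
  exact (tendsto_const_nhds.mul (tendsto_choose_mul_pow_of_tendsto_mul_atTop m hmean)).div hmean hμ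

theorem succ_mul_poisson_succ_div (μ : ℝ) (hμ : μ ≠ 0) (k : ℕ) :
    (k + 1 : ℕ) * (Real.exp (-μ) * μ ^ (k + 1) / (k + 1).factorial) / μ
      = Real.exp (-μ) * μ ^ k / k.factorial := by
  push_cast [Nat.factorial_succ]
  field_simp
  ring

theorem large_economy_fixed_mean_general
    (μ : ℝ) (hμ : 0 < μ) (M : ℝ)
    (hMattained : ∃ k : ℕ, M = Real.exp (-μ) * μ ^ k / (Nat.factorial k : ℝ)) :
    ∀ ε > (0 : ℝ), ∃ n₀ : ℕ, μ ≤ (n₀ : ℝ) ∧ ∀ n : ℕ, n > n₀ →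
      ((∃ Qa Qb : ℝ,
        (∃ q : ℕ → ℝ, (∀ k ≤ n, 0 ≤ q k ∧ q k ≤ 1) ∧
          (1 / (n * (μ / n))) * ∑ k ∈ range (n + 1),
            (k : ℝ) * q k * ((n.choose k : ℝ) * (μ / n) ^ k * (1 - μ / n) ^ (n - k)) = Qa ∧
          (1 / (n * (1 - μ / n))) * ∑ k ∈ range (n + 1),
            ((n : ℝ) - k) * q k * ((n.choose k : ℝ) * (μ / n) ^ k * (1 - μ / n) ^ (n - k)) = Qb) ∧
        Qa - Qb > M - ε) ∧
      (∃ Qa Qb : ℝ,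
        (∃ q : ℕ → ℝ, (∀ k ≤ n, 0 ≤ q k ∧ q k ≤ 1) ∧
          (1 / (n * (μ / n))) * ∑ k ∈ range (n + 1),
            (k : ℝ) * q k * ((n.choose k : ℝ) * (μ / n) ^ k * (1 - μ / n) ^ (n - k)) = Qa ∧
          (1 / (n * (1 - μ / n))) * ∑ k ∈ range (n + 1),
            ((n : ℝ) - k) * q k * ((n.choose k : ℝ) * (μ / n) ^ k * (1 - μ / n) ^ (n - k)) = Qb) ∧
        Qb - Qa > M - ε)) := by
  intro ε hε
  obtain ⟨k, rfl⟩ := hMattained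
  have hlim := tendsto_mul_binomWeight_div μ hμ.ne' (k + 1)
  rw [succ_mul_poisson_succ_div μ hμ.ne'] at hlim
  obtain ⟨N, hN⟩ := eventually_atTop.1 (hlim.eventually (eventually_gt_nhds (sub_lt_self _ hε)))
  refine ⟨max N (max k ⌈μ⌉₊), (Nat.le_ceil μ).trans (by exact_mod_cast by omega), fun n hn => ?_⟩
  have hμn : μ < n := (Nat.le_ceil μ).trans_lt (by exact_mod_cast (by omega : ⌈μ⌉₊ < n))
  have hn_pos : 0 < n := by exact_mod_cast hμ.trans hμn
  have hp₀ : 0 < μ / n := by positivity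
  have hp₁ : μ / n < 1 := (div_lt_one (hμ.trans hμn)).2 hμn
  have hgap := hN n (by omega)
  refine ⟨⟨interimA n (μ / n) _, interimB n (μ / n) _,
      ⟨fun j => if j < k + 1 then 0 else 1, fun j _ => by dsimp only; split_ifs <;> norm_num,
        rfl, rfl⟩, ?_⟩,
    ⟨interimA n (μ / n) _, interimB n (μ / n) _,
      ⟨fun j => if j < k + 1 then 1 else 0, fun j _ => by dsimp only; split_ifs <;> norm_num,
        rfl, rfl⟩, ?_⟩⟩
  · rw [interimA_sub_interimB_ite_lt hn_pos hp₀ hp₁ (by omega)]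
    exact hgap
  · rw [interimB_sub_interimA_ite_lt hn_pos hp₀ hp₁ (by omega)]
    exact hgap

/-- Proposition 4: for fixed mean `μ > 0` and independent priors with `π_n = μ/n`,
with `M(μ) = max_k e^{−μ}·μ^k/k!` (which exists and is positive), for large `n` there
exist reduced form implementable pairs whose interim allocation probabilities differ
by more than `M(μ) − ε` in both directions. -/
theorem large_economy_fixed_mean
    (μ : ℝ) (hμ : 0 < μ) (M : ℝ) (hMpos : 0 < M)
    (hMattained : ∃ k : ℕ, M = Real.exp (-μ) * μ ^ k / (Nat.factorial k : ℝ))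
    (hMmax : ∀ k : ℕ, Real.exp (-μ) * μ ^ k / (Nat.factorial k : ℝ) ≤ M) :
    ∀ ε > (0 : ℝ), ∃ n₀ : ℕ, μ ≤ (n₀ : ℝ) ∧ ∀ n : ℕ, n > n₀ →
      ((∃ Qa Qb : ℝ,
        (∃ q : ℕ → ℝ, (∀ k ≤ n, 0 ≤ q k ∧ q k ≤ 1) ∧
          (1 / (n * (μ / n))) * ∑ k ∈ range (n + 1),
            (k : ℝ) * q k * ((n.choose k : ℝ) * (μ / n) ^ k * (1 - μ / n) ^ (n - k)) = Qa ∧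
          (1 / (n * (1 - μ / n))) * ∑ k ∈ range (n + 1),
            ((n : ℝ) - k) * q k * ((n.choose k : ℝ) * (μ / n) ^ k * (1 - μ / n) ^ (n - k)) = Qb) ∧
        Qa - Qb > M - ε) ∧
      (∃ Qa Qb : ℝ,
        (∃ q : ℕ → ℝ, (∀ k ≤ n, 0 ≤ q k ∧ q k ≤ 1) ∧
          (1 / (n * (μ / n))) * ∑ k ∈ range (n + 1),
            (k : ℝ) * q k * ((n.choose k : ℝ) * (μ / n) ^ k * (1 - μ / n) ^ (n - k)) = Qa ∧
          (1 / (n * (1 - μ / n))) * ∑ k ∈ range (n + 1),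
            ((n : ℝ) - k) * q k * ((n.choose k : ℝ) * (μ / n) ^ k * (1 - μ / n) ^ (n - k)) = Qb) ∧
        Qb - Qa > M - ε)) :=
  large_economy_fixed_mean_general μ hμ M hMattained
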